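/- arXiv:2012.12179 — 4 statements merged into one kernel-verified Lean document; each statement's English description precedes it below -/
import Mathlib

section
/- Let R be an S×S real matrix and p : Fin S → ℝ a vector. Define R_succ = diag(p)·R and R_fail = (I − diag(p))·R, where diag(p) is the diagonal matrix with entries p and I is the identity. If a row vector β satisfies β·R = β and the matrix I − R_fail is invertible, then β·R_succ·(I − R_fail)⁻¹ = β. -/
open Matrix

namespace Matrix

variable {n α : Type*} [Fintype n] [DecidableEq n]

theorem vecMul_mul_eq_vecMul_one_sub_one_sub_mul [Ring α] {A : Matrix n n α} {β : n → α}
    (hβ : β ᵥ* A = β) (D : Matrix n n α) :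
    β ᵥ* (D * A) = β ᵥ* (1 - (1 - D) * A) := by
  have hsplit : D * A = A - (1 - D) * A := by noncomm_ring
  rw [hsplit, vecMul_sub, vecMul_sub, hβ, vecMul_one]

theorem vecMul_vecMul_nonsing_inv_cancel [CommRing α] (β : n → α) {M : Matrix n n α}
    (hM : IsUnit M) : β ᵥ* M ᵥ* M⁻¹ = β := by
  rw [vecMul_vecMul, mul_nonsing_inv _ ((isUnit_iff_isUnit_det M).mp hM), vecMul_one]

end Matrix

/-- If `β` is stationary for `R` (i.e. `β·R = β`), `R_succ = diag(p)·R`,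
`R_fail = (I − diag(p))·R`, and `I − R_fail` is invertible, then
`β·R_succ·(I − R_fail)⁻¹ = β`. -/
theorem vecMul_succ_inv_one_sub_fail {S : ℕ} (R : Matrix (Fin S) (Fin S) ℝ)
    (p : Fin S → ℝ) (β : Fin S → ℝ)
    (hβ : Matrix.vecMul β R = β)
    (hinv : IsUnit (1 - (1 - Matrix.diagonal p) * R)) :
    Matrix.vecMul (Matrix.vecMul β (Matrix.diagonal p * R))
      (1 - (1 - Matrix.diagonal p) * R)⁻¹ = β := by
  rw [vecMul_mul_eq_vecMul_one_sub_one_sub_mul hβ, vecMul_vecMul_nonsing_inv_cancel β hinv]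
end

section
/- Let R be an S×S real matrix with nonnegative entries and all row sums equal to 1, let p : Fin S → ℝ satisfy 0 ≤ p_i ≤ 1 for all i, and let β be a row vector with nonnegative entries, ∑_i β_i = 1, and β·R = β. Define R_succ = diag(p)·R and R_fail = (I − diag(p))·R, and assume there exists a positive integer m with ‖(R_fail)^m‖ < 1 in the ℓ∞ operator norm. Define φ : ℕ → (Fin S → ℝ) by φ_q = β·R_succ·(R_fail)^q (so φ_q is the block corresponding to age q+1). Then: (i) every entry of every φ_q is nonnegative; (ii) the family (φ_q)_{q≥0} is summable with ∑'_{q=0}^∞ φ_q = β, hence ∑'_{q=0}^∞ ∑_j (φ_q)_j = 1; (iii) φ_{q+1} = φ_q·R_fail for all q; and (iv) φ_0 = (∑'_{q=0}^∞ φ_q)·R_succ. In other words, φ is a stationary probability distribution of the joint age–state chain in which the age resets upon successful observation (sub-transition R_succ) and increments otherwise (sub-transition R_fail). -/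
open Matrix

-- The `ℓ∞` operator norm (maximum absolute row sum) on square matrices.
attribute [local instance] Matrix.linftyOpNormedRing

/-- The block `φ_q = β·R_succ·R_fail^q` of the stationary distribution of the joint
age–state chain (corresponding to age `q + 1`). -/
noncomputable def statPhi {S : ℕ} (R : Matrix (Fin S) (Fin S) ℝ) (p : Fin S → ℝ)
    (β : Fin S → ℝ) (q : ℕ) : Fin S → ℝ :=
  Matrix.vecMul (Matrix.vecMul β (Matrix.diagonal p * R)) (((1 - Matrix.diagonal p) * R) ^ q)

/-!
Since `R_succ = R - R_fail` and `β R = β`, each block telescopes: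
`φ_q = β R_fail^q - β R_fail^(q+1)`. The bound `‖R_fail^m‖ < 1` forces `R_fail^n → 0`, so the
partial sums `β - β R_fail^n` of the nonnegative family `φ` converge to `β`. The recursion and
the boundary condition `φ_0 = β R_succ` hold by construction.
-/

open Filter Finset Topology

theorem tendsto_pow_atTop_nhds_zero_of_norm_pow_lt_one {A : Type*} [SeminormedRing A] {x : A}
    {m : ℕ} (hm : 0 < m) (h : ‖x ^ m‖ < 1) :
    Tendsto (fun n : ℕ ↦ x ^ n) atTop (𝓝 0) := by
  have hsplit (n : ℕ) : x ^ n = x ^ (n % m) * (x ^ m) ^ (n / m) := by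
    rw [← pow_mul, ← pow_add, Nat.mod_add_div]
  set C := ∑ r ∈ range m, ‖x ^ r‖
  have hbound (n : ℕ) : ‖x ^ n‖ ≤ C * ‖(x ^ m) ^ (n / m)‖ := by
    rw [hsplit]
    refine (norm_mul_le _ _).trans (mul_le_mul_of_nonneg_right ?_ (norm_nonneg _))
    exact single_le_sum (fun r _ ↦ norm_nonneg (x ^ r)) (mem_range.2 (Nat.mod_lt n hm))
  have hlim : Tendsto (fun n : ℕ ↦ C * ‖(x ^ m) ^ (n / m)‖) atTop (𝓝 0) := by
    simpa only [Function.comp_def, norm_zero, mul_zero] using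
      ((tendsto_pow_atTop_nhds_zero_of_norm_lt_one h).comp
        (Nat.tendsto_div_const_atTop hm.ne')).norm.const_mul C
  exact squeeze_zero_norm hbound hlim

theorem Pi.hasSum_of_nonneg_of_tendsto_sum_range {ι : Type*} {f : ℕ → ι → ℝ} {a : ι → ℝ}
    (hf : ∀ n i, 0 ≤ f n i)
    (h : Tendsto (fun n ↦ ∑ k ∈ range n, f k) atTop (𝓝 a)) : HasSum f a := by
  refine Pi.hasSum.2 fun i ↦ (hasSum_iff_tendsto_nat_of_nonneg (hf · i) _).2 ?_
  simpa only [Function.comp_def, Finset.sum_apply] using ((continuous_apply i).tendsto a).comp h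

namespace Matrix

variable {l n α : Type*} [Fintype n] [Semiring α] [PartialOrder α] [IsOrderedRing α]

theorem vecMul_apply_nonneg {v : n → α} {A : Matrix n l α} (hv : ∀ i, 0 ≤ v i)
    (hA : ∀ i j, 0 ≤ A i j) (j : l) : 0 ≤ (v ᵥ* A) j :=
  sum_nonneg fun i _ ↦ mul_nonneg (hv i) (hA i j)

end Matrix

section AgeChain

variable {S : ℕ} (R : Matrix (Fin S) (Fin S) ℝ) (p β : Fin S → ℝ)

theorem statPhi_zero : statPhi R p β 0 = β ᵥ* (diagonal p * R) := by
  rw [statPhi, pow_zero, vecMul_one]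

theorem statPhi_succ (q : ℕ) :
    statPhi R p β (q + 1) = statPhi R p β q ᵥ* ((1 - diagonal p) * R) := by
  rw [statPhi, statPhi, pow_succ, ← vecMul_vecMul]

theorem statPhi_nonneg (hR0 : ∀ i j, 0 ≤ R i j) (hp : ∀ i, 0 ≤ p i ∧ p i ≤ 1)
    (hβ0 : ∀ i, 0 ≤ β i) (q : ℕ) (j : Fin S) : 0 ≤ statPhi R p β q j := by
  have hsucc (i j : Fin S) : 0 ≤ (diagonal p * R) i j := by
    rw [diagonal_mul]
    exact mul_nonneg (hp i).1 (hR0 i j)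
  have hfail (i j : Fin S) : 0 ≤ ((1 - diagonal p) * R) i j := by
    rw [← diagonal_one, diagonal_sub, diagonal_mul]
    exact mul_nonneg (sub_nonneg.2 (hp i).2) (hR0 i j)
  exact vecMul_apply_nonneg (vecMul_apply_nonneg hβ0 hsucc) (pow_apply_nonneg hfail q) j

theorem statPhi_eq_sub (hβR : β ᵥ* R = β) (q : ℕ) :
    statPhi R p β q =
      β ᵥ* ((1 - diagonal p) * R) ^ q - β ᵥ* ((1 - diagonal p) * R) ^ (q + 1) := by
  have hsplit : diagonal p * R = R - (1 - diagonal p) * R := by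
    rw [sub_mul, one_mul, sub_sub_cancel]
  rw [statPhi, hsplit, vecMul_vecMul, sub_mul, vecMul_sub, ← vecMul_vecMul, hβR, ← pow_succ']

theorem sum_range_statPhi (hβR : β ᵥ* R = β) (n : ℕ) :
    ∑ q ∈ range n, statPhi R p β q = β - β ᵥ* ((1 - diagonal p) * R) ^ n := by
  simp only [statPhi_eq_sub R p β hβR]
  rw [sum_range_sub', pow_zero, vecMul_one]

theorem hasSum_statPhi (hR0 : ∀ i j, 0 ≤ R i j) (hp : ∀ i, 0 ≤ p i ∧ p i ≤ 1)
    (hβ0 : ∀ i, 0 ≤ β i) (hβR : β ᵥ* R = β) {m : ℕ} (hm : 0 < m)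
    (hnorm : ‖((1 - diagonal p) * R) ^ m‖ < 1) : HasSum (statPhi R p β) β := by
  have hpow := tendsto_pow_atTop_nhds_zero_of_norm_pow_lt_one hm hnorm
  have hcont : Continuous fun M : Matrix (Fin S) (Fin S) ℝ ↦ β ᵥ* M :=
    continuous_const.matrix_vecMul continuous_id
  have hrest : Tendsto (fun n : ℕ ↦ β ᵥ* ((1 - diagonal p) * R) ^ n) atTop (𝓝 0) := by
    simpa only [Function.comp_def, vecMul_zero] using (hcont.tendsto 0).comp hpow
  refine Pi.hasSum_of_nonneg_of_tendsto_sum_range (statPhi_nonneg R p β hR0 hp hβ0) ?_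
  simpa only [sum_range_statPhi R p β hβR, sub_zero] using tendsto_const_nhds.sub hrest

end AgeChain

theorem statPhi_stationary_general {S : ℕ} (R : Matrix (Fin S) (Fin S) ℝ) (p : Fin S → ℝ)
    (β : Fin S → ℝ)
    (hR0 : ∀ i j, 0 ≤ R i j)
    (hp : ∀ i, 0 ≤ p i ∧ p i ≤ 1)
    (hβ0 : ∀ i, 0 ≤ β i) (hβ1 : ∑ i, β i = 1)
    (hβR : Matrix.vecMul β R = β)
    (m : ℕ) (hm : 0 < m)
    (hnorm : ‖((1 - Matrix.diagonal p) * R) ^ m‖ < 1) :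
    (∀ q j, 0 ≤ statPhi R p β q j) ∧
    HasSum (fun q : ℕ => statPhi R p β q) β ∧
    HasSum (fun q : ℕ => ∑ j, statPhi R p β q j) 1 ∧
    (∀ q : ℕ, statPhi R p β (q + 1) =
      Matrix.vecMul (statPhi R p β q) ((1 - Matrix.diagonal p) * R)) ∧
    statPhi R p β 0 =
      Matrix.vecMul (∑' q : ℕ, statPhi R p β q) (Matrix.diagonal p * R) := by
  have hsum := hasSum_statPhi R p β hR0 hp hβ0 hβR hm hnorm
  have hmass : HasSum (fun q : ℕ => ∑ j, statPhi R p β q j) (∑ j, β j) :=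
    hasSum_sum fun j _ ↦ Pi.hasSum.1 hsum j
  refine ⟨statPhi_nonneg R p β hR0 hp hβ0, hsum, hβ1 ▸ hmass, statPhi_succ R p β, ?_⟩
  rw [hsum.tsum_eq, statPhi_zero]

/-- `φ_q = β·R_succ·R_fail^q` is a stationary probability distribution of the joint
age–state chain: (i) all entries are nonnegative; (ii) `∑' q, φ_q = β`, hence the total
mass is `1`; (iii) `φ_{q+1} = φ_q·R_fail`; (iv) `φ_0 = (∑' q, φ_q)·R_succ`. -/
theorem statPhi_stationary {S : ℕ} (R : Matrix (Fin S) (Fin S) ℝ) (p : Fin S → ℝ)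
    (β : Fin S → ℝ)
    (hR0 : ∀ i j, 0 ≤ R i j) (hR1 : ∀ i, ∑ j, R i j = 1)
    (hp : ∀ i, 0 ≤ p i ∧ p i ≤ 1)
    (hβ0 : ∀ i, 0 ≤ β i) (hβ1 : ∑ i, β i = 1)
    (hβR : Matrix.vecMul β R = β)
    (m : ℕ) (hm : 0 < m)
    (hnorm : ‖((1 - Matrix.diagonal p) * R) ^ m‖ < 1) :
    (∀ q j, 0 ≤ statPhi R p β q j) ∧
    HasSum (fun q : ℕ => statPhi R p β q) β ∧
    HasSum (fun q : ℕ => ∑ j, statPhi R p β q j) 1 ∧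
    (∀ q : ℕ, statPhi R p β (q + 1) =
      Matrix.vecMul (statPhi R p β q) ((1 - Matrix.diagonal p) * R)) ∧
    statPhi R p β 0 =
      Matrix.vecMul (∑' q : ℕ, statPhi R p β q) (Matrix.diagonal p * R) :=
  statPhi_stationary_general R p β hR0 hp hβ0 hβ1 hβR m hm hnorm
end

section
/- Let R be an S×S real matrix with nonnegative entries and all row sums equal to 1, and suppose R is primitive, i.e., there exists a positive integer n such that every entry of R^n is strictly positive. Let p : Fin S → ℝ satisfy 0 ≤ p_i ≤ 1 for all i and p_{s₀} > 0 for some state s₀. Then the substochastic matrix R_fail = (I − diag(p))·R is eventually a strict contraction in the row-sum sense: there exists a positive integer m such that for every row i, ∑_j ((R_fail)^m)_{ij} < 1; equivalently, ‖(R_fail)^m‖ < 1 in the ℓ∞ operator norm, so the spectral radius of R_fail is strictly less than 1 and I − R_fail is invertible. -/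
open Matrix

attribute [local instance] Matrix.linftyOpNormedRing
attribute [local instance] Matrix.linftyOpNormedAlgebra
attribute [local instance] Matrix.linftyOpNormedAddCommGroup

/-!
Write `F = (1 - diag p) R`. Entrywise `0 ≤ F ≤ R`, and `F 1 = 1 - p` because `R 1 = 1`, so
`F^(k+1) 1 = F^k (1 - p) ≤ R^k (1 - p) = 1 - R^k p`: the chance of never being observed in slots
`0, …, k` is at most one minus the chance of being observed in slot `k`. If `R^n > 0`, then
`(R^n p)_i ≥ (R^n)_{i s₀} p_{s₀} > 0`, so all row sums of the nonnegative matrix `F^(n+1)`, hence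
its `ℓ∞` norm, are below `1`. Finally `ρ(F)^(n+1) ≤ ‖F^(n+1)‖ < 1`, so `1` lies in the resolvent
set of `F`.
-/

namespace Matrix

section Entrywise

variable {n α : Type*} [Fintype n] [Semiring α] [PartialOrder α] [IsOrderedRing α]

theorem mulVec_apply_le_mulVec_apply {m : Type*} {A B : Matrix m n α}
    (hAB : ∀ i j, A i j ≤ B i j) {v : n → α} (hv : ∀ j, 0 ≤ v j) (i : m) :
    (A *ᵥ v) i ≤ (B *ᵥ v) i :=
  Finset.sum_le_sum fun j _ => mul_le_mul_of_nonneg_right (hAB i j) (hv j)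

theorem pow_apply_le_pow_apply [DecidableEq n] {A B : Matrix n n α} (hA : ∀ i j, 0 ≤ A i j)
    (hAB : ∀ i j, A i j ≤ B i j) (k : ℕ) (i j : n) : (A ^ k) i j ≤ (B ^ k) i j := by
  have hB : ∀ i j, 0 ≤ B i j := fun i j => (hA i j).trans (hAB i j)
  induction k generalizing j with
  | zero => rfl
  | succ k ih =>
    simp only [pow_succ, mul_apply]
    exact Finset.sum_le_sum fun l _ =>
      mul_le_mul (ih l) (hAB l j) (hA l j) (pow_apply_nonneg hB k i l)

end Entrywise

theorem linfty_opNorm_lt_one_of_nonneg {m n : Type*} [Fintype m] [Fintype n]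
    {A : Matrix m n ℝ} (hA : ∀ i j, 0 ≤ A i j) (hrow : ∀ i, ∑ j, A i j < 1) : ‖A‖ < 1 := by
  rw [linfty_opNorm_def, ← NNReal.coe_one, NNReal.coe_lt_coe,
    Finset.sup_lt_iff (bot_lt_iff_ne_bot.2 one_ne_zero)]
  intro i _
  rw [← NNReal.coe_lt_coe, NNReal.coe_sum]
  simpa only [coe_nnnorm, Real.norm_of_nonneg (hA i _), NNReal.coe_one] using hrow i

section Failure

variable {n α : Type*} [Fintype n] [DecidableEq n] [Ring α] {R : Matrix n n α} {p : n → α}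

theorem one_sub_diagonal_mul_apply (i j : n) :
    ((1 - diagonal p) * R) i j = (1 - p i) * R i j := by
  rw [sub_mul, one_mul, sub_apply, diagonal_mul, sub_mul, one_mul]

variable [PartialOrder α] [IsOrderedRing α]

theorem one_sub_diagonal_mul_mulVec_one (hR : R ∈ rowStochastic α n) :
    ((1 - diagonal p) * R) *ᵥ 1 = 1 - p := by
  rw [← mulVec_mulVec, one_vecMul_of_mem_rowStochastic hR, sub_mulVec, one_mulVec]
  ext i
  simp [mulVec_diagonal]

theorem one_sub_diagonal_mul_apply_nonneg (hR : R ∈ rowStochastic α n) (hp : ∀ i, p i ≤ 1)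
    (i j : n) : 0 ≤ ((1 - diagonal p) * R) i j := by
  rw [one_sub_diagonal_mul_apply]
  exact mul_nonneg (sub_nonneg.2 (hp i)) (nonneg_of_mem_rowStochastic hR)

theorem one_sub_diagonal_mul_apply_le (hR : R ∈ rowStochastic α n) (hp : ∀ i, 0 ≤ p i)
    (i j : n) : ((1 - diagonal p) * R) i j ≤ R i j := by
  rw [one_sub_diagonal_mul_apply]
  exact mul_le_of_le_one_left (nonneg_of_mem_rowStochastic hR) (sub_le_self _ (hp i))

theorem one_sub_diagonal_mul_pow_succ_mulVec_one_le (hR : R ∈ rowStochastic α n)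
    (hp₀ : ∀ i, 0 ≤ p i) (hp₁ : ∀ i, p i ≤ 1) (k : ℕ) (i : n) :
    (((1 - diagonal p) * R) ^ (k + 1) *ᵥ 1) i ≤ 1 - (R ^ k *ᵥ p) i :=
  calc (((1 - diagonal p) * R) ^ (k + 1) *ᵥ 1) i
      = (((1 - diagonal p) * R) ^ k *ᵥ (1 - p)) i := by
        rw [pow_succ, ← mulVec_mulVec, one_sub_diagonal_mul_mulVec_one hR]
    _ ≤ (R ^ k *ᵥ (1 - p)) i :=
        mulVec_apply_le_mulVec_apply
          (pow_apply_le_pow_apply (one_sub_diagonal_mul_apply_nonneg hR hp₁)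
            (one_sub_diagonal_mul_apply_le hR hp₀) k)
          (fun j => sub_nonneg.2 (hp₁ j)) i
    _ = 1 - (R ^ k *ᵥ p) i := by
        rw [mulVec_sub, one_vecMul_of_mem_rowStochastic (pow_mem hR k)]
        rfl

end Failure

end Matrix

section SpectralRadius

variable {𝕜 A : Type*} [NormedField 𝕜] [NormedRing A] [NormedAlgebra 𝕜 A]

theorem spectralRadius_lt_one_of_norm_pow_lt_one [CompleteSpace A] [NormOneClass A] {a : A}
    {k : ℕ} (hk : k ≠ 0) (h : ‖a ^ k‖ < 1) : spectralRadius 𝕜 a < 1 := by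
  by_contra! h1
  have := (one_le_pow₀ h1 (n := k)).trans
    ((spectrum.spectralRadius_pow_le a k hk).trans (spectrum.spectralRadius_le_nnnorm (a ^ k)))
  exact (ENNReal.one_le_coe_iff.1 this).not_gt (by exact_mod_cast h)

theorem isUnit_one_sub_of_spectralRadius_lt_one {a : A} (h : spectralRadius 𝕜 a < 1) :
    IsUnit (1 - a) := by
  have := spectrum.mem_resolventSet_of_spectralRadius_lt (k := (1 : 𝕜)) (by simpa using h)
  rwa [spectrum.mem_resolventSet_iff, map_one] at this

end SpectralRadius

/-- If `R` is a primitive row-stochastic matrix (irreducible and aperiodic chain) and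
the observation probability `p` is positive in some state, then the substochastic
matrix `R_fail = (I − diag(p))·R` is eventually a strict contraction in the row-sum
sense: there is a positive integer `m` with all row sums of `R_fail^m` strictly below
`1`, equivalently `‖R_fail^m‖ < 1` in the `ℓ∞` operator norm; hence the spectral
radius of `R_fail` is strictly less than `1` and `I − R_fail` is invertible. -/
theorem fail_matrix_eventually_contracting {S : ℕ} (R : Matrix (Fin S) (Fin S) ℝ)
    (hR0 : ∀ i j, 0 ≤ R i j) (hR1 : ∀ i, ∑ j, R i j = 1)
    (hprim : ∃ n : ℕ, 0 < n ∧ ∀ i j, 0 < (R ^ n) i j)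
    (p : Fin S → ℝ) (hp : ∀ i, 0 ≤ p i ∧ p i ≤ 1)
    (s₀ : Fin S) (hs₀ : 0 < p s₀) :
    ∃ m : ℕ, 0 < m ∧
      (∀ i, ∑ j, (((1 - Matrix.diagonal p) * R) ^ m) i j < 1) ∧
      ‖((1 - Matrix.diagonal p) * R) ^ m‖ < 1 ∧
      spectralRadius ℝ ((1 - Matrix.diagonal p) * R) < 1 ∧
      IsUnit (1 - (1 - Matrix.diagonal p) * R) := by
  obtain ⟨n, -, hRn⟩ := hprim
  have hR : R ∈ rowStochastic ℝ (Fin S) := mem_rowStochastic_iff_sum.2 ⟨hR0, hR1⟩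
  have : Nonempty (Fin S) := ⟨s₀⟩
  have hrow : ∀ i, ∑ j, (((1 - diagonal p) * R) ^ (n + 1)) i j < 1 := fun i => by
    have hobserved : 0 < (R ^ n *ᵥ p) i :=
      (mul_pos (hRn i s₀) hs₀).trans_le <| Finset.single_le_sum
        (fun t _ => mul_nonneg (pow_apply_nonneg hR0 n i t) (hp t).1) (Finset.mem_univ s₀)
    calc ∑ j, (((1 - diagonal p) * R) ^ (n + 1)) i j
        = (((1 - diagonal p) * R) ^ (n + 1) *ᵥ 1) i := by simp [mulVec, dotProduct]
      _ ≤ 1 - (R ^ n *ᵥ p) i := one_sub_diagonal_mul_pow_succ_mulVec_one_le hR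
          (fun i => (hp i).1) (fun i => (hp i).2) n i
      _ < 1 := sub_lt_self 1 hobserved
  have hnorm := linfty_opNorm_lt_one_of_nonneg (pow_apply_nonneg
    (one_sub_diagonal_mul_apply_nonneg hR fun i => (hp i).2) _) hrow
  have hspec := spectralRadius_lt_one_of_norm_pow_lt_one (𝕜 := ℝ) n.succ_ne_zero hnorm
  exact ⟨n + 1, n.succ_pos, hrow, hnorm, hspec, isUnit_one_sub_of_spectralRadius_lt_one hspec⟩
end

section
/- (Monotonicity of the value function in the ages, Lemma used for Theorem 2.) Fix K ≥ 1 sources, N ≥ 1 sensors, a discount factor α with 0 < α < 1, and for each source k ∈ Fin K: a finite state space Fin S_k, a transition matrix R_k with nonnegative entries and row sums 1, observation probabilities P_{n,k,s} ∈ [0,1] for each sensor n and state s, and channel success probabilities q_n ∈ [0,1]. A system state is a pair (s, Δ) with s ∈ ∏_k Fin S_k and Δ : Fin K → ℕ. Define the one-step cost C((s,Δ), a) = 1 + (1/K) ∑_k Δ_k · (1 − q_a · P_{a,k,s_k}), and define the value-iteration sequence V_0 ≡ 0 and V_{n+1}(s, Δ) = min_{a ∈ Fin N} [ C((s,Δ),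 a) + α · ∑_{s' ∈ ∏_k Fin S_k} ∑_{ζ : Fin K → Bool} (∏_k (R_k)_{s_k, s'_k}) · (∏_k (if ζ_k then q_a·P_{a,k,s_k} else 1 − q_a·P_{a,k,s_k})) · V_n(s', Δ^ζ) ], where Δ^ζ_k = 1 if ζ_k = true and Δ^ζ_k = Δ_k + 1 otherwise. Then for every n, every s, and all age vectors Δ, Δ' with Δ_k ≤ Δ'_k for all k, one has V_n(s, Δ) ≤ V_n(s, Δ'); i.e., each value-iteration iterate is nondecreasing in the age of every source. -/
/-! The Bellman operator maps functions nondecreasing in the ages to such functions: the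
one-step cost has nonnegative coefficients `1 - q_a P_{a,k,s_k}` on the ages, the transition
weights are nonnegative, and the post-decision ages `ζ ↦ (1 or Δ_k + 1)` are monotone in `Δ`.
Induction on `n` then gives the claim. -/

open Matrix

/-- Value iteration for the discounted monitoring MDP. A system state is a pair
`(s, Δ)` with `s : ∀ k, Fin (S k)` the source states and `Δ : Fin K → ℕ` the ages.
`V 0 ≡ 0`, and `V (n+1) (s, Δ)` is the minimum over sensors `a : Fin N` of the
one-step cost `1 + (1/K) ∑_k Δ_k (1 − q_a P_{a,k,s_k})` plus `α` times the expected
value of `V n` at the next state, where each source `k` is observed (indicator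
`ζ k`) with probability `q_a·P_{a,k,s_k}` (age resets to `1`, otherwise `Δ_k + 1`)
and its state transitions according to `R k`. -/
noncomputable def valueIter (K N : ℕ) (hN : 0 < N) (α : ℝ) (S : Fin K → ℕ)
    (R : ∀ k : Fin K, Matrix (Fin (S k)) (Fin (S k)) ℝ)
    (P : Fin N → ∀ k : Fin K, Fin (S k) → ℝ)
    (q : Fin N → ℝ) :
    ℕ → (∀ k : Fin K, Fin (S k)) → (Fin K → ℕ) → ℝ
  | 0, _, _ => 0
  | n + 1, s, Δ =>
    haveI : Nonempty (Fin N) := ⟨⟨0, hN⟩⟩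
    Finset.univ.inf' Finset.univ_nonempty fun a : Fin N =>
      (1 + (1 / (K : ℝ)) * ∑ k, (Δ k : ℝ) * (1 - q a * P a k (s k))) +
        α * ∑ s' : ∀ k : Fin K, Fin (S k), ∑ ζ : Fin K → Bool,
          (∏ k, R k (s k) (s' k)) *
            (∏ k, if ζ k then q a * P a k (s k) else 1 - q a * P a k (s k)) *
            valueIter K N hN α S R P q n s' (fun k => if ζ k then 1 else Δ k + 1)

section

variable {ι : Type*}

lemma sum_mul_one_sub_le_sum_mul_one_sub [Fintype ι] {p : ι → ℝ} (hp : ∀ k, p k ≤ 1)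
    {x y : ι → ℝ} (hxy : x ≤ y) : ∑ k, x k * (1 - p k) ≤ ∑ k, y k * (1 - p k) :=
  Finset.sum_le_sum fun k _ => mul_le_mul_of_nonneg_right (hxy k) (sub_nonneg.2 (hp k))

lemma prod_bernoulli_nonneg [Fintype ι] {p : ι → ℝ} (hp : ∀ k, p k ∈ unitInterval)
    (ζ : ι → Bool) :
    0 ≤ ∏ k, if ζ k then p k else 1 - p k :=
  Finset.prod_nonneg fun k _ => by
    split
    · exact (hp k).1
    · exact sub_nonneg.2 (hp k).2

lemma resetAges_mono (ζ : ι → Bool) {Δ Δ' : ι → ℕ} (h : Δ ≤ Δ') :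
    (fun k => if ζ k then 1 else Δ k + 1) ≤ fun k => if ζ k then 1 else Δ' k + 1 := fun k => by
  dsimp only
  split
  · rfl
  · exact Nat.succ_le_succ (h k)

end

theorem valueIter_mono_in_age_general (K N : ℕ) (hN : 0 < N)
    (α : ℝ) (hα : 0 < α ∧ α < 1) (S : Fin K → ℕ)
    (R : ∀ k : Fin K, Matrix (Fin (S k)) (Fin (S k)) ℝ)
    (P : Fin N → ∀ k : Fin K, Fin (S k) → ℝ)
    (q : Fin N → ℝ)
    (hR0 : ∀ k i j, 0 ≤ R k i j)
    (hP : ∀ n k s, 0 ≤ P n k s ∧ P n k s ≤ 1)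
    (hq : ∀ n, 0 ≤ q n ∧ q n ≤ 1) :
    ∀ (n : ℕ) (s : ∀ k : Fin K, Fin (S k)) (Δ Δ' : Fin K → ℕ),
      (∀ k, Δ k ≤ Δ' k) →
      valueIter K N hN α S R P q n s Δ ≤ valueIter K N hN α S R P q n s Δ' := by
  intro n
  induction n with
  | zero => intro _ _ _ _; rfl
  | succ n ih =>
    intro s Δ Δ' h
    rw [valueIter, valueIter]
    refine Finset.le_inf' _ _ fun a ha => Finset.inf'_le_of_le _ ha ?_
    have hobs : ∀ k, q a * P a k (s k) ∈ unitInterval := fun k =>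
      unitInterval.mul_mem (hq a) (hP a k (s k))
    have hcost := sum_mul_one_sub_le_sum_mul_one_sub (fun k => (hobs k).2)
      (fun k => Nat.cast_le.2 (h k) : (fun k => (Δ k : ℝ)) ≤ fun k => (Δ' k : ℝ))
    refine add_le_add
      (add_le_add le_rfl (mul_le_mul_of_nonneg_left hcost (one_div_nonneg.2 K.cast_nonneg)))
      (mul_le_mul_of_nonneg_left ?_ hα.1.le)
    refine Finset.sum_le_sum fun s' _ => Finset.sum_le_sum fun ζ _ => ?_
    have hweight : 0 ≤ (∏ k, R k (s k) (s' k)) *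
        ∏ k, if ζ k then q a * P a k (s k) else 1 - q a * P a k (s k) :=
      mul_nonneg (Finset.prod_nonneg fun k _ => hR0 k (s k) (s' k))
        (prod_bernoulli_nonneg hobs ζ)
    exact mul_le_mul_of_nonneg_left (ih s' _ _ (resetAges_mono ζ h)) hweight

/-- **Monotonicity of the value-iteration iterates in the ages.**
Each iterate `V_n` of value iteration for the discounted monitoring MDP is
nondecreasing in the age of every source: if `Δ_k ≤ Δ'_k` for all `k`, then
`V_n(s, Δ) ≤ V_n(s, Δ')`. -/
theorem valueIter_mono_in_age (K N : ℕ) (hK : 0 < K) (hN : 0 < N)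
    (α : ℝ) (hα : 0 < α ∧ α < 1) (S : Fin K → ℕ)
    (R : ∀ k : Fin K, Matrix (Fin (S k)) (Fin (S k)) ℝ)
    (P : Fin N → ∀ k : Fin K, Fin (S k) → ℝ)
    (q : Fin N → ℝ)
    (hR0 : ∀ k i j, 0 ≤ R k i j) (hR1 : ∀ k i, ∑ j, R k i j = 1)
    (hP : ∀ n k s, 0 ≤ P n k s ∧ P n k s ≤ 1)
    (hq : ∀ n, 0 ≤ q n ∧ q n ≤ 1) :
    ∀ (n : ℕ) (s : ∀ k : Fin K, Fin (S k)) (Δ Δ' : Fin K → ℕ),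
      (∀ k, Δ k ≤ Δ' k) →
      valueIter K N hN α S R P q n s Δ ≤ valueIter K N hN α S R P q n s Δ' :=
  valueIter_mono_in_age_general K N hN α hα S R P q hR0 hP hq
end
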